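/- (Reduction of a product of two integrals where one multiplies an internal node.) With separable Volterra operators P_α, P_β, P_γ, P_δ and twists τ_ω as above, for continuous f₁, …, f₅, the expression f₁·P_α(f₂·P_γ(f₄)·P_δ(f₅))·P_β(f₃) equals the sum of the eight operator-linear (chain) terms produced by first expanding P_γ(f₄)·P_δ(f₅) via the twisted identity inside P_α and then expanding the resulting products with P_β(f₃) via the iterated-integral reduction formula. -/

import Mathlib

/-- The separable Volterra operator with kernel `K(x,t) = k(x)h(t)`. -/
noncomputable def volterraP (k h f : ℝ → ℝ) (x : ℝ) : ℝ :=
  ∫ t in (0:ℝ)..x, k x * h t * f t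

open MeasureTheory intervalIntegral in
lemma volterraP_eq (k h f : ℝ → ℝ) (x : ℝ) :
    volterraP k h f x = k x * ∫ t in (0:ℝ)..x, h t * f t := by
  unfold volterraP
  simp only [mul_assoc]
  rw [intervalIntegral.integral_const_mul]

@[fun_prop]
lemma volterraP_continuous {k h f : ℝ → ℝ} (hk : Continuous k) (hh : Continuous h)
    (hf : Continuous f) : Continuous (volterraP k h f) := by
  have h1 : Continuous fun x => ∫ t in (0:ℝ)..x, h t * f t :=
    intervalIntegral.continuous_primitive (fun a b => (hh.mul hf).intervalIntegrable a b) 0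
  have := hk.mul h1
  rw [show volterraP k h f = fun x => k x * ∫ t in (0:ℝ)..x, h t * f t from funext (volterraP_eq k h f)]
  exact this

lemma volterraP_congr {k h f g : ℝ → ℝ} (hfg : ∀ t, f t = g t) (x : ℝ) :
    volterraP k h f x = volterraP k h g x := by
  have : f = g := funext hfg
  rw [this]

lemma volterraP_add {k h f g : ℝ → ℝ} (hk : Continuous k) (hh : Continuous h)
    (hf : Continuous f) (hg : Continuous g) (x : ℝ) :
    volterraP k h (fun t => f t + g t) x = volterraP k h f x + volterraP k h g x := by
  unfold volterraP
  rw [← intervalIntegral.integral_add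
      ((by fun_prop : Continuous fun t => k x * h t * f t).intervalIntegrable 0 x)
      ((by fun_prop : Continuous fun t => k x * h t * g t).intervalIntegrable 0 x)]
  congr 1; funext t; ring

lemma volterraP_mul {k₁ h₁ k₂ h₂ f g : ℝ → ℝ}
    (hk₁ : Continuous k₁) (hh₁ : Continuous h₁) (hk₂ : Continuous k₂) (hh₂ : Continuous h₂)
    (hf : Continuous f) (hg : Continuous g)
    (hk₁0 : ∀ x, k₁ x ≠ 0) (hk₂0 : ∀ x, k₂ x ≠ 0) (x : ℝ) :
    volterraP k₁ h₁ f x * volterraP k₂ h₂ g x =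
      (k₂ x / k₂ 0) * volterraP k₁ h₁
        (fun t => (k₂ t / k₂ 0)⁻¹ * f t * volterraP k₂ h₂ g t) x +
      (k₁ x / k₁ 0) * volterraP k₂ h₂
        (fun t => (k₁ t / k₁ 0)⁻¹ * g t * volterraP k₁ h₁ f t) x := by
  set A : ℝ → ℝ := fun y => ∫ t in (0:ℝ)..y, h₁ t * f t with hA
  set B : ℝ → ℝ := fun y => ∫ t in (0:ℝ)..y, h₂ t * g t with hB
  have hAc : Continuous A :=
    intervalIntegral.continuous_primitive (fun a b => (hh₁.mul hf).intervalIntegrable a b) 0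
  have hBc : Continuous B :=
    intervalIntegral.continuous_primitive (fun a b => (hh₂.mul hg).intervalIntegrable a b) 0
  have hAd : ∀ y : ℝ, HasDerivAt A (h₁ y * f y) y := fun y =>
    intervalIntegral.integral_hasDerivAt_right ((hh₁.mul hf).intervalIntegrable 0 y)
      ((hh₁.mul hf).stronglyMeasurableAtFilter _ _) (hh₁.mul hf).continuousAt
  have hBd : ∀ y : ℝ, HasDerivAt B (h₂ y * g y) y := fun y =>
    intervalIntegral.integral_hasDerivAt_right ((hh₂.mul hg).intervalIntegrable 0 y)
      ((hh₂.mul hg).stronglyMeasurableAtFilter _ _) (hh₂.mul hg).continuousAt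
  have key : ∫ t in (0:ℝ)..x, (h₁ t * f t) * B t + A t * (h₂ t * g t)
      = A x * B x - A 0 * B 0 :=
    intervalIntegral.integral_deriv_mul_eq_sub (fun t _ => hAd t) (fun t _ => hBd t)
      ((hh₁.mul hf).intervalIntegrable 0 x)
      ((hh₂.mul hg).intervalIntegrable 0 x)
  have hA0 : A 0 = 0 := by simp [hA]
  have hB0 : B 0 = 0 := by simp [hB]
  have hPB : ∀ t, volterraP k₂ h₂ g t = k₂ t * B t := fun t => volterraP_eq _ _ _ t
  have hPA : ∀ t, volterraP k₁ h₁ f t = k₁ t * A t := fun t => volterraP_eq _ _ _ t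
  have e1 : volterraP k₁ h₁ (fun t => (k₂ t / k₂ 0)⁻¹ * f t * volterraP k₂ h₂ g t) x
      = k₁ x * (k₂ 0 * ∫ t in (0:ℝ)..x, h₁ t * f t * B t) := by
    rw [volterraP_eq]
    congr 1
    rw [← intervalIntegral.integral_const_mul]
    apply intervalIntegral.integral_congr
    intro t _
    show h₁ t * ((k₂ t / k₂ 0)⁻¹ * f t * volterraP k₂ h₂ g t) = k₂ 0 * (h₁ t * f t * B t)
    rw [hPB t]
    field_simp [hk₂0 t]
  have e2 : volterraP k₂ h₂ (fun t => (k₁ t / k₁ 0)⁻¹ * g t * volterraP k₁ h₁ f t) x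
      = k₂ x * (k₁ 0 * ∫ t in (0:ℝ)..x, A t * (h₂ t * g t)) := by
    rw [volterraP_eq]
    congr 1
    rw [← intervalIntegral.integral_const_mul]
    apply intervalIntegral.integral_congr
    intro t _
    show h₂ t * ((k₁ t / k₁ 0)⁻¹ * g t * volterraP k₁ h₁ f t) = k₁ 0 * (A t * (h₂ t * g t))
    rw [hPA t]
    field_simp [hk₁0 t]
  have hsplit : ∫ t in (0:ℝ)..x, (h₁ t * f t) * B t + A t * (h₂ t * g t)
      = (∫ t in (0:ℝ)..x, h₁ t * f t * B t) + ∫ t in (0:ℝ)..x, A t * (h₂ t * g t) :=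
    intervalIntegral.integral_add (((hh₁.mul hf).mul hBc).intervalIntegrable 0 x)
      ((hAc.mul (hh₂.mul hg)).intervalIntegrable 0 x)
  rw [hPA x, hPB x, e1, e2]
  have hAB : (∫ t in (0:ℝ)..x, h₁ t * f t * B t) + (∫ t in (0:ℝ)..x, A t * (h₂ t * g t))
      = A x * B x := by
    rw [← hsplit, key, hA0, hB0]; ring
  have hk10 := hk₁0 0
  have hk20 := hk₂0 0
  have c1 : k₂ x / k₂ 0 * (k₁ x * (k₂ 0 * ∫ t in (0:ℝ)..x, h₁ t * f t * B t))
      = k₁ x * k₂ x * ∫ t in (0:ℝ)..x, h₁ t * f t * B t := by field_simp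
  have c2 : k₁ x / k₁ 0 * (k₂ x * (k₁ 0 * ∫ t in (0:ℝ)..x, A t * (h₂ t * g t)))
      = k₁ x * k₂ x * ∫ t in (0:ℝ)..x, A t * (h₂ t * g t) := by field_simp
  rw [c1, c2, ← mul_add, hAB]
  ring

/-- Reduction of `f₁·P_α(f₂·P_γ(f₄)·P_δ(f₅))·P_β(f₃)` to the sum of the eight
operator-linear (chain) terms produced by the reduction algorithm: first
expanding `P_γ(f₄)·P_δ(f₅)` via the twisted identity inside `P_α`, then
expanding the resulting products with `P_β(f₃)` via the iterated-integral
reduction formula. -/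
theorem reduction_internal_product_eight_terms
    (ka ha kb hb kg hg kd hd : ℝ → ℝ)
    (hka : Continuous ka) (hha : Continuous ha)
    (hkb : Continuous kb) (hhb : Continuous hb)
    (hkg : Continuous kg) (hhg : Continuous hg)
    (hkd : Continuous kd) (hhd : Continuous hd)
    (hka0 : ∀ x, ka x ≠ 0) (hkb0 : ∀ x, kb x ≠ 0)
    (hkg0 : ∀ x, kg x ≠ 0) (hkd0 : ∀ x, kd x ≠ 0)
    (f₁ f₂ f₃ f₄ f₅ : ℝ → ℝ)
    (hf₁ : Continuous f₁) (hf₂ : Continuous f₂) (hf₃ : Continuous f₃)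
    (hf₄ : Continuous f₄) (hf₅ : Continuous f₅) :
    let τa : ℝ → ℝ := fun x => ka x / ka 0
    let τb : ℝ → ℝ := fun x => kb x / kb 0
    let τg : ℝ → ℝ := fun x => kg x / kg 0
    let τd : ℝ → ℝ := fun x => kd x / kd 0
    ∀ x : ℝ,
      f₁ x * volterraP ka ha
          (fun t => f₂ t * volterraP kg hg f₄ t * volterraP kd hd f₅ t) x *
        volterraP kb hb f₃ x =
      -- 1 : τ_α f₁ · P_β(τ_α⁻¹ f₃ · P_α(τ_δ f₂ · P_γ(τ_δ⁻¹ f₄ · P_δ(f₅))))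
      τa x * f₁ x * volterraP kb hb
        (fun t => (τa t)⁻¹ * f₃ t * volterraP ka ha
          (fun u => τd u * f₂ u * volterraP kg hg
            (fun v => (τd v)⁻¹ * f₄ v * volterraP kd hd f₅ v) u) t) x +
      -- 2 : τ_β f₁ · P_α(τ_β⁻¹ τ_δ f₂ τ_γ · P_β(τ_γ⁻¹ f₃ · P_γ(τ_δ⁻¹ f₄ · P_δ(f₅))))
      τb x * f₁ x * volterraP ka ha
        (fun t => (τb t)⁻¹ * τd t * f₂ t * τg t * volterraP kb hb
          (fun u => (τg u)⁻¹ * f₃ u * volterraP kg hg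
            (fun v => (τd v)⁻¹ * f₄ v * volterraP kd hd f₅ v) u) t) x +
      -- 3 : τ_β f₁ · P_α(τ_δ f₂ · P_γ(τ_β⁻¹ f₄ · P_β(τ_δ⁻¹ f₃ · P_δ(f₅))))
      τb x * f₁ x * volterraP ka ha
        (fun t => τd t * f₂ t * volterraP kg hg
          (fun u => (τb u)⁻¹ * f₄ u * volterraP kb hb
            (fun v => (τd v)⁻¹ * f₃ v * volterraP kd hd f₅ v) u) t) x +
      -- 4 : τ_β f₁ · P_α(τ_δ f₂ · P_γ(τ_δ⁻¹ f₄ · P_δ(τ_β⁻¹ f₅ · P_β(f₃))))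
      τb x * f₁ x * volterraP ka ha
        (fun t => τd t * f₂ t * volterraP kg hg
          (fun u => (τd u)⁻¹ * f₄ u * volterraP kd hd
            (fun v => (τb v)⁻¹ * f₅ v * volterraP kb hb f₃ v) u) t) x +
      -- 5 : τ_α f₁ · P_β(τ_α⁻¹ f₃ · P_α(τ_γ f₂ · P_δ(τ_γ⁻¹ f₅ · P_γ(f₄))))
      τa x * f₁ x * volterraP kb hb
        (fun t => (τa t)⁻¹ * f₃ t * volterraP ka ha
          (fun u => τg u * f₂ u * volterraP kd hd
            (fun v => (τg v)⁻¹ * f₅ v * volterraP kg hg f₄ v) u) t) x +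
      -- 6 : τ_β f₁ · P_α(τ_β⁻¹ τ_γ f₂ τ_δ · P_β(τ_δ⁻¹ f₃ · P_δ(τ_γ⁻¹ f₅ · P_γ(f₄))))
      τb x * f₁ x * volterraP ka ha
        (fun t => (τb t)⁻¹ * τg t * f₂ t * τd t * volterraP kb hb
          (fun u => (τd u)⁻¹ * f₃ u * volterraP kd hd
            (fun v => (τg v)⁻¹ * f₅ v * volterraP kg hg f₄ v) u) t) x +
      -- 7 : τ_β f₁ · P_α(τ_γ f₂ · P_δ(τ_β⁻¹ f₅ · P_β(τ_γ⁻¹ f₃ · P_γ(f₄))))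
      τb x * f₁ x * volterraP ka ha
        (fun t => τg t * f₂ t * volterraP kd hd
          (fun u => (τb u)⁻¹ * f₅ u * volterraP kb hb
            (fun v => (τg v)⁻¹ * f₃ v * volterraP kg hg f₄ v) u) t) x +
      -- 8 : τ_β f₁ · P_α(τ_γ f₂ · P_δ(τ_γ⁻¹ f₅ · P_γ(τ_β⁻¹ f₄ · P_β(f₃))))
      τb x * f₁ x * volterraP ka ha
        (fun t => τg t * f₂ t * volterraP kd hd
          (fun u => (τg u)⁻¹ * f₅ u * volterraP kg hg
            (fun v => (τb v)⁻¹ * f₄ v * volterraP kb hb f₃ v) u) t) x := by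
  intro τa τb τg τd x
  unfold τa τb τg τd
  clear τa τb τg τd
  -- continuity of inverse twists
  have cbi : Continuous fun t => (kb t / kb 0)⁻¹ := by
    have e : (fun t => (kb t / kb 0)⁻¹) = fun t => kb 0 / kb t := by
      funext t; rw [inv_div]
    rw [e]; exact continuous_const.div hkb hkb0
  have cgi : Continuous fun t => (kg t / kg 0)⁻¹ := by
    have e : (fun t => (kg t / kg 0)⁻¹) = fun t => kg 0 / kg t := by
      funext t; rw [inv_div]
    rw [e]; exact continuous_const.div hkg hkg0
  have cdi : Continuous fun t => (kd t / kd 0)⁻¹ := by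
    have e : (fun t => (kd t / kd 0)⁻¹) = fun t => kd 0 / kd t := by
      funext t; rw [inv_div]
    rw [e]; exact continuous_const.div hkd hkd0
  have cPg4 : Continuous (volterraP kg hg f₄) := volterraP_continuous hkg hhg hf₄
  have cPd5 : Continuous (volterraP kd hd f₅) := volterraP_continuous hkd hhd hf₅
  have cPb3 : Continuous (volterraP kb hb f₃) := volterraP_continuous hkb hhb hf₃
  have cu1 : Continuous (fun v => (kd v / kd 0)⁻¹ * f₄ v * volterraP kd hd f₅ v) := (cdi.mul hf₄).mul cPd5
  have cu2 : Continuous (fun v => (kg v / kg 0)⁻¹ * f₅ v * volterraP kg hg f₄ v) := (cgi.mul hf₅).mul cPg4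
  have cPu1 : Continuous (volterraP kg hg (fun v => (kd v / kd 0)⁻¹ * f₄ v * volterraP kd hd f₅ v)) := volterraP_continuous hkg hhg cu1
  have cPu2 : Continuous (volterraP kd hd (fun v => (kg v / kg 0)⁻¹ * f₅ v * volterraP kg hg f₄ v)) := volterraP_continuous hkd hhd cu2
  have cF1 : Continuous (fun u => kd u / kd 0 * f₂ u * volterraP kg hg (fun v => (kd v / kd 0)⁻¹ * f₄ v * volterraP kd hd f₅ v) u) := ((hkd.div_const _).mul hf₂).mul cPu1
  have cF2 : Continuous (fun u => kg u / kg 0 * f₂ u * volterraP kd hd (fun v => (kg v / kg 0)⁻¹ * f₅ v * volterraP kg hg f₄ v) u) := ((hkg.div_const _).mul hf₂).mul cPu2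
  have cq3 : Continuous (fun v => (kd v / kd 0)⁻¹ * f₃ v * volterraP kd hd f₅ v) := (cdi.mul hf₃).mul cPd5
  have cq4 : Continuous (fun v => (kb v / kb 0)⁻¹ * f₅ v * volterraP kb hb f₃ v) := (cbi.mul hf₅).mul cPb3
  have cq7 : Continuous (fun v => (kg v / kg 0)⁻¹ * f₃ v * volterraP kg hg f₄ v) := (cgi.mul hf₃).mul cPg4
  have cq8 : Continuous (fun v => (kb v / kb 0)⁻¹ * f₄ v * volterraP kb hb f₃ v) := (cbi.mul hf₄).mul cPb3
  have cW3 : Continuous (fun u => (kb u / kb 0)⁻¹ * f₄ u * volterraP kb hb (fun v => (kd v / kd 0)⁻¹ * f₃ v * volterraP kd hd f₅ v) u) := (cbi.mul hf₄).mul (volterraP_continuous hkb hhb cq3)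
  have cW4 : Continuous (fun u => (kd u / kd 0)⁻¹ * f₄ u * volterraP kd hd (fun v => (kb v / kb 0)⁻¹ * f₅ v * volterraP kb hb f₃ v) u) := (cdi.mul hf₄).mul (volterraP_continuous hkd hhd cq4)
  have cW7 : Continuous (fun u => (kb u / kb 0)⁻¹ * f₅ u * volterraP kb hb (fun v => (kg v / kg 0)⁻¹ * f₃ v * volterraP kg hg f₄ v) u) := (cbi.mul hf₅).mul (volterraP_continuous hkb hhb cq7)
  have cW8 : Continuous (fun u => (kg u / kg 0)⁻¹ * f₅ u * volterraP kg hg (fun v => (kb v / kb 0)⁻¹ * f₄ v * volterraP kb hb f₃ v) u) := (cgi.mul hf₅).mul (volterraP_continuous hkg hhg cq8)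
  have cV2 : Continuous (fun u => (kg u / kg 0)⁻¹ * f₃ u * volterraP kg hg (fun v => (kd v / kd 0)⁻¹ * f₄ v * volterraP kd hd f₅ v) u) := (cgi.mul hf₃).mul cPu1
  have cV6 : Continuous (fun u => (kd u / kd 0)⁻¹ * f₃ u * volterraP kd hd (fun v => (kg v / kg 0)⁻¹ * f₅ v * volterraP kg hg f₄ v) u) := (cdi.mul hf₃).mul cPu2
  have cT2 : Continuous (fun t => (kb t / kb 0)⁻¹ * (kd t / kd 0) * f₂ t * (kg t / kg 0) * volterraP kb hb (fun u => (kg u / kg 0)⁻¹ * f₃ u * volterraP kg hg (fun v => (kd v / kd 0)⁻¹ * f₄ v * volterraP kd hd f₅ v) u) t) :=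
    (((cbi.mul (hkd.div_const _)).mul hf₂).mul (hkg.div_const _)).mul
      (volterraP_continuous hkb hhb cV2)
  have cT6 : Continuous (fun t => (kb t / kb 0)⁻¹ * (kg t / kg 0) * f₂ t * (kd t / kd 0) * volterraP kb hb (fun u => (kd u / kd 0)⁻¹ * f₃ u * volterraP kd hd (fun v => (kg v / kg 0)⁻¹ * f₅ v * volterraP kg hg f₄ v) u) t) :=
    (((cbi.mul (hkg.div_const _)).mul hf₂).mul (hkd.div_const _)).mul
      (volterraP_continuous hkb hhb cV6)
  have cT3 : Continuous (fun t => kd t / kd 0 * f₂ t * volterraP kg hg (fun u => (kb u / kb 0)⁻¹ * f₄ u * volterraP kb hb (fun v => (kd v / kd 0)⁻¹ * f₃ v * volterraP kd hd f₅ v) u) t) :=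
    ((hkd.div_const _).mul hf₂).mul (volterraP_continuous hkg hhg cW3)
  have cT4 : Continuous (fun t => kd t / kd 0 * f₂ t * volterraP kg hg (fun u => (kd u / kd 0)⁻¹ * f₄ u * volterraP kd hd (fun v => (kb v / kb 0)⁻¹ * f₅ v * volterraP kb hb f₃ v) u) t) :=
    ((hkd.div_const _).mul hf₂).mul (volterraP_continuous hkg hhg cW4)
  have cT7 : Continuous (fun t => kg t / kg 0 * f₂ t * volterraP kd hd (fun u => (kb u / kb 0)⁻¹ * f₅ u * volterraP kb hb (fun v => (kg v / kg 0)⁻¹ * f₃ v * volterraP kg hg f₄ v) u) t) :=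
    ((hkg.div_const _).mul hf₂).mul (volterraP_continuous hkd hhd cW7)
  have cT8 : Continuous (fun t => kg t / kg 0 * f₂ t * volterraP kd hd (fun u => (kg u / kg 0)⁻¹ * f₅ u * volterraP kg hg (fun v => (kb v / kb 0)⁻¹ * f₄ v * volterraP kb hb f₃ v) u) t) :=
    ((hkg.div_const _).mul hf₂).mul (volterraP_continuous hkd hhd cW8)
  -- step 1 : expand the inner product
  have hpt1 : ∀ t, f₂ t * volterraP kg hg f₄ t * volterraP kd hd f₅ t
      = (kd t / kd 0 * f₂ t * volterraP kg hg (fun v => (kd v / kd 0)⁻¹ * f₄ v * volterraP kd hd f₅ v) t) + (kg t / kg 0 * f₂ t * volterraP kd hd (fun v => (kg v / kg 0)⁻¹ * f₅ v * volterraP kg hg f₄ v) t) := by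
    intro t
    have h := volterraP_mul hkg hhg hkd hhd hf₄ hf₅ hkg0 hkd0 t
    linear_combination f₂ t * h
  have h1 : volterraP ka ha
        (fun t => f₂ t * volterraP kg hg f₄ t * volterraP kd hd f₅ t) x
      = volterraP ka ha (fun u => kd u / kd 0 * f₂ u * volterraP kg hg (fun v => (kd v / kd 0)⁻¹ * f₄ v * volterraP kd hd f₅ v) u) x + volterraP ka ha (fun u => kg u / kg 0 * f₂ u * volterraP kd hd (fun v => (kg v / kg 0)⁻¹ * f₅ v * volterraP kg hg f₄ v) u) x :=
    (volterraP_congr hpt1 x).trans (volterraP_add hka hha cF1 cF2 x)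
  -- step 2 : expand the two outer products
  have h2 : volterraP ka ha (fun u => kd u / kd 0 * f₂ u * volterraP kg hg (fun v => (kd v / kd 0)⁻¹ * f₄ v * volterraP kd hd f₅ v) u) x * volterraP kb hb f₃ x
      = kb x / kb 0 * volterraP ka ha (fun t => (kb t / kb 0)⁻¹ * (kd t / kd 0 * f₂ t * volterraP kg hg (fun v => (kd v / kd 0)⁻¹ * f₄ v * volterraP kd hd f₅ v) t) * volterraP kb hb f₃ t) x
        + ka x / ka 0 * volterraP kb hb (fun t => (ka t / ka 0)⁻¹ * f₃ t * volterraP ka ha (fun u => kd u / kd 0 * f₂ u * volterraP kg hg (fun v => (kd v / kd 0)⁻¹ * f₄ v * volterraP kd hd f₅ v) u) t) x :=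
    volterraP_mul hka hha hkb hhb cF1 hf₃ hka0 hkb0 x
  have h2' : volterraP ka ha (fun u => kg u / kg 0 * f₂ u * volterraP kd hd (fun v => (kg v / kg 0)⁻¹ * f₅ v * volterraP kg hg f₄ v) u) x * volterraP kb hb f₃ x
      = kb x / kb 0 * volterraP ka ha (fun t => (kb t / kb 0)⁻¹ * (kg t / kg 0 * f₂ t * volterraP kd hd (fun v => (kg v / kg 0)⁻¹ * f₅ v * volterraP kg hg f₄ v) t) * volterraP kb hb f₃ t) x
        + ka x / ka 0 * volterraP kb hb (fun t => (ka t / ka 0)⁻¹ * f₃ t * volterraP ka ha (fun u => kg u / kg 0 * f₂ u * volterraP kd hd (fun v => (kg v / kg 0)⁻¹ * f₅ v * volterraP kg hg f₄ v) u) t) x :=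
    volterraP_mul hka hha hkb hhb cF2 hf₃ hka0 hkb0 x
  -- deepest split, first branch
  have hYpt1 : ∀ u, (kb u / kb 0)⁻¹ * ((kd u / kd 0)⁻¹ * f₄ u * volterraP kd hd f₅ u) * volterraP kb hb f₃ u = ((kb u / kb 0)⁻¹ * f₄ u * volterraP kb hb (fun v => (kd v / kd 0)⁻¹ * f₃ v * volterraP kd hd f₅ v) u) + ((kd u / kd 0)⁻¹ * f₄ u * volterraP kd hd (fun v => (kb v / kb 0)⁻¹ * f₅ v * volterraP kb hb f₃ v) u) := by
    intro u
    have h := volterraP_mul hkd hhd hkb hhb hf₅ hf₃ hkd0 hkb0 u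
    have hb1 : (kb u / kb 0)⁻¹ * (kb u / kb 0) = 1 :=
      inv_mul_cancel₀ (div_ne_zero (hkb0 u) (hkb0 0))
    have hd1 : (kd u / kd 0)⁻¹ * (kd u / kd 0) = 1 :=
      inv_mul_cancel₀ (div_ne_zero (hkd0 u) (hkd0 0))
    linear_combination ((kb u / kb 0)⁻¹ * (kd u / kd 0)⁻¹ * f₄ u) * h
      + ((kd u / kd 0)⁻¹ * f₄ u * volterraP kd hd (fun v => (kb v / kb 0)⁻¹ * f₅ v * volterraP kb hb f₃ v) u) * hb1
      + ((kb u / kb 0)⁻¹ * f₄ u * volterraP kb hb (fun v => (kd v / kd 0)⁻¹ * f₃ v * volterraP kd hd f₅ v) u) * hd1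
  have hYs1 : ∀ t, volterraP kg hg (fun u => (kb u / kb 0)⁻¹ * ((kd u / kd 0)⁻¹ * f₄ u * volterraP kd hd f₅ u) * volterraP kb hb f₃ u) t
      = volterraP kg hg (fun u => (kb u / kb 0)⁻¹ * f₄ u * volterraP kb hb (fun v => (kd v / kd 0)⁻¹ * f₃ v * volterraP kd hd f₅ v) u) t + volterraP kg hg (fun u => (kd u / kd 0)⁻¹ * f₄ u * volterraP kd hd (fun v => (kb v / kb 0)⁻¹ * f₅ v * volterraP kb hb f₃ v) u) t := fun t =>
    (volterraP_congr hYpt1 t).trans (volterraP_add hkg hhg cW3 cW4 t)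
  -- deepest split, second branch
  have hYpt2 : ∀ u, (kb u / kb 0)⁻¹ * ((kg u / kg 0)⁻¹ * f₅ u * volterraP kg hg f₄ u) * volterraP kb hb f₃ u = ((kb u / kb 0)⁻¹ * f₅ u * volterraP kb hb (fun v => (kg v / kg 0)⁻¹ * f₃ v * volterraP kg hg f₄ v) u) + ((kg u / kg 0)⁻¹ * f₅ u * volterraP kg hg (fun v => (kb v / kb 0)⁻¹ * f₄ v * volterraP kb hb f₃ v) u) := by
    intro u
    have h := volterraP_mul hkg hhg hkb hhb hf₄ hf₃ hkg0 hkb0 u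
    have hb1 : (kb u / kb 0)⁻¹ * (kb u / kb 0) = 1 :=
      inv_mul_cancel₀ (div_ne_zero (hkb0 u) (hkb0 0))
    have hg1 : (kg u / kg 0)⁻¹ * (kg u / kg 0) = 1 :=
      inv_mul_cancel₀ (div_ne_zero (hkg0 u) (hkg0 0))
    linear_combination ((kb u / kb 0)⁻¹ * (kg u / kg 0)⁻¹ * f₅ u) * h
      + ((kg u / kg 0)⁻¹ * f₅ u * volterraP kg hg (fun v => (kb v / kb 0)⁻¹ * f₄ v * volterraP kb hb f₃ v) u) * hb1
      + ((kb u / kb 0)⁻¹ * f₅ u * volterraP kb hb (fun v => (kg v / kg 0)⁻¹ * f₃ v * volterraP kg hg f₄ v) u) * hg1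
  have hYs2 : ∀ t, volterraP kd hd (fun u => (kb u / kb 0)⁻¹ * ((kg u / kg 0)⁻¹ * f₅ u * volterraP kg hg f₄ u) * volterraP kb hb f₃ u) t
      = volterraP kd hd (fun u => (kb u / kb 0)⁻¹ * f₅ u * volterraP kb hb (fun v => (kg v / kg 0)⁻¹ * f₃ v * volterraP kg hg f₄ v) u) t + volterraP kd hd (fun u => (kg u / kg 0)⁻¹ * f₅ u * volterraP kg hg (fun v => (kb v / kb 0)⁻¹ * f₄ v * volterraP kb hb f₃ v) u) t := fun t =>
    (volterraP_congr hYpt2 t).trans (volterraP_add hkd hhd cW7 cW8 t)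
  -- middle split, first branch
  have hG1pt : ∀ t, (kb t / kb 0)⁻¹ * (kd t / kd 0 * f₂ t * volterraP kg hg (fun v => (kd v / kd 0)⁻¹ * f₄ v * volterraP kd hd f₅ v) t) * volterraP kb hb f₃ t = (kd t / kd 0 * f₂ t * volterraP kg hg (fun u => (kb u / kb 0)⁻¹ * f₄ u * volterraP kb hb (fun v => (kd v / kd 0)⁻¹ * f₃ v * volterraP kd hd f₅ v) u) t) + (kd t / kd 0 * f₂ t * volterraP kg hg (fun u => (kd u / kd 0)⁻¹ * f₄ u * volterraP kd hd (fun v => (kb v / kb 0)⁻¹ * f₅ v * volterraP kb hb f₃ v) u) t) + ((kb t / kb 0)⁻¹ * (kd t / kd 0) * f₂ t * (kg t / kg 0) * volterraP kb hb (fun u => (kg u / kg 0)⁻¹ * f₃ u * volterraP kg hg (fun v => (kd v / kd 0)⁻¹ * f₄ v * volterraP kd hd f₅ v) u) t) := by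
    intro t
    have h := volterraP_mul hkg hhg hkb hhb cu1 hf₃ hkg0 hkb0 t
    have hys := hYs1 t
    have hb1 : (kb t / kb 0)⁻¹ * (kb t / kb 0) = 1 :=
      inv_mul_cancel₀ (div_ne_zero (hkb0 t) (hkb0 0))
    linear_combination ((kb t / kb 0)⁻¹ * (kd t / kd 0) * f₂ t) * h
      + ((kd t / kd 0) * f₂ t) * hys
      + ((kd t / kd 0) * f₂ t * volterraP kg hg (fun u => (kb u / kb 0)⁻¹ * ((kd u / kd 0)⁻¹ * f₄ u * volterraP kd hd f₅ u) * volterraP kb hb f₃ u) t) * hb1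
  have hG1 : volterraP ka ha (fun t => (kb t / kb 0)⁻¹ * (kd t / kd 0 * f₂ t * volterraP kg hg (fun v => (kd v / kd 0)⁻¹ * f₄ v * volterraP kd hd f₅ v) t) * volterraP kb hb f₃ t) x
      = volterraP ka ha (fun t => kd t / kd 0 * f₂ t * volterraP kg hg (fun u => (kb u / kb 0)⁻¹ * f₄ u * volterraP kb hb (fun v => (kd v / kd 0)⁻¹ * f₃ v * volterraP kd hd f₅ v) u) t) x + volterraP ka ha (fun t => kd t / kd 0 * f₂ t * volterraP kg hg (fun u => (kd u / kd 0)⁻¹ * f₄ u * volterraP kd hd (fun v => (kb v / kb 0)⁻¹ * f₅ v * volterraP kb hb f₃ v) u) t) x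
        + volterraP ka ha (fun t => (kb t / kb 0)⁻¹ * (kd t / kd 0) * f₂ t * (kg t / kg 0) * volterraP kb hb (fun u => (kg u / kg 0)⁻¹ * f₃ u * volterraP kg hg (fun v => (kd v / kd 0)⁻¹ * f₄ v * volterraP kd hd f₅ v) u) t) x := by
    calc volterraP ka ha (fun t => (kb t / kb 0)⁻¹ * (kd t / kd 0 * f₂ t * volterraP kg hg (fun v => (kd v / kd 0)⁻¹ * f₄ v * volterraP kd hd f₅ v) t) * volterraP kb hb f₃ t) x
        = volterraP ka ha (fun t => (kd t / kd 0 * f₂ t * volterraP kg hg (fun u => (kb u / kb 0)⁻¹ * f₄ u * volterraP kb hb (fun v => (kd v / kd 0)⁻¹ * f₃ v * volterraP kd hd f₅ v) u) t) + (kd t / kd 0 * f₂ t * volterraP kg hg (fun u => (kd u / kd 0)⁻¹ * f₄ u * volterraP kd hd (fun v => (kb v / kb 0)⁻¹ * f₅ v * volterraP kb hb f₃ v) u) t) + ((kb t / kb 0)⁻¹ * (kd t / kd 0) * f₂ t * (kg t / kg 0) * volterraP kb hb (fun u => (kg u / kg 0)⁻¹ * f₃ u * volterraP kg hg (fun v =>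 (kd v / kd 0)⁻¹ * f₄ v * volterraP kd hd f₅ v) u) t)) x :=
          volterraP_congr hG1pt x
      _ = volterraP ka ha (fun t => (kd t / kd 0 * f₂ t * volterraP kg hg (fun u => (kb u / kb 0)⁻¹ * f₄ u * volterraP kb hb (fun v => (kd v / kd 0)⁻¹ * f₃ v * volterraP kd hd f₅ v) u) t) + (kd t / kd 0 * f₂ t * volterraP kg hg (fun u => (kd u / kd 0)⁻¹ * f₄ u * volterraP kd hd (fun v => (kb v / kb 0)⁻¹ * f₅ v * volterraP kb hb f₃ v) u) t)) x
          + volterraP ka ha (fun t => (kb t / kb 0)⁻¹ * (kd t / kd 0) * f₂ t * (kg t / kg 0) * volterraP kb hb (fun u => (kg u / kg 0)⁻¹ * f₃ u * volterraP kg hg (fun v => (kd v / kd 0)⁻¹ * f₄ v * volterraP kd hd f₅ v) u) t) x :=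
          volterraP_add hka hha (cT3.add cT4) cT2 x
      _ = volterraP ka ha (fun t => kd t / kd 0 * f₂ t * volterraP kg hg (fun u => (kb u / kb 0)⁻¹ * f₄ u * volterraP kb hb (fun v => (kd v / kd 0)⁻¹ * f₃ v * volterraP kd hd f₅ v) u) t) x + volterraP ka ha (fun t => kd t / kd 0 * f₂ t * volterraP kg hg (fun u => (kd u / kd 0)⁻¹ * f₄ u * volterraP kd hd (fun v => (kb v / kb 0)⁻¹ * f₅ v * volterraP kb hb f₃ v) u) t) x
          + volterraP ka ha (fun t => (kb t / kb 0)⁻¹ * (kd t / kd 0) * f₂ t * (kg t / kg 0) * volterraP kb hb (fun u => (kg u / kg 0)⁻¹ * f₃ u * volterraP kg hg (fun v => (kd v / kd 0)⁻¹ * f₄ v * volterraP kd hd f₅ v) u) t) x := by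
          rw [volterraP_add hka hha cT3 cT4 x]
  -- middle split, second branch
  have hG2pt : ∀ t, (kb t / kb 0)⁻¹ * (kg t / kg 0 * f₂ t * volterraP kd hd (fun v => (kg v / kg 0)⁻¹ * f₅ v * volterraP kg hg f₄ v) t) * volterraP kb hb f₃ t = (kg t / kg 0 * f₂ t * volterraP kd hd (fun u => (kb u / kb 0)⁻¹ * f₅ u * volterraP kb hb (fun v => (kg v / kg 0)⁻¹ * f₃ v * volterraP kg hg f₄ v) u) t) + (kg t / kg 0 * f₂ t * volterraP kd hd (fun u => (kg u / kg 0)⁻¹ * f₅ u * volterraP kg hg (fun v => (kb v / kb 0)⁻¹ * f₄ v * volterraP kb hb f₃ v) u) t) + ((kb t / kb 0)⁻¹ * (kg t / kg 0) * f₂ t * (kd t / kd 0) * volterraP kb hb (fun u => (kd u / kd 0)⁻¹ * f₃ u * volterraP kd hd (fun v => (kg v / kg 0)⁻¹ * f₅ v * volterraP kg hg f₄ v) u) t) := by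
    intro t
    have h := volterraP_mul hkd hhd hkb hhb cu2 hf₃ hkd0 hkb0 t
    have hys := hYs2 t
    have hb1 : (kb t / kb 0)⁻¹ * (kb t / kb 0) = 1 :=
      inv_mul_cancel₀ (div_ne_zero (hkb0 t) (hkb0 0))
    linear_combination ((kb t / kb 0)⁻¹ * (kg t / kg 0) * f₂ t) * h
      + ((kg t / kg 0) * f₂ t) * hys
      + ((kg t / kg 0) * f₂ t * volterraP kd hd (fun u => (kb u / kb 0)⁻¹ * ((kg u / kg 0)⁻¹ * f₅ u * volterraP kg hg f₄ u) * volterraP kb hb f₃ u) t) * hb1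
  have hG2 : volterraP ka ha (fun t => (kb t / kb 0)⁻¹ * (kg t / kg 0 * f₂ t * volterraP kd hd (fun v => (kg v / kg 0)⁻¹ * f₅ v * volterraP kg hg f₄ v) t) * volterraP kb hb f₃ t) x
      = volterraP ka ha (fun t => kg t / kg 0 * f₂ t * volterraP kd hd (fun u => (kb u / kb 0)⁻¹ * f₅ u * volterraP kb hb (fun v => (kg v / kg 0)⁻¹ * f₃ v * volterraP kg hg f₄ v) u) t) x + volterraP ka ha (fun t => kg t / kg 0 * f₂ t * volterraP kd hd (fun u => (kg u / kg 0)⁻¹ * f₅ u * volterraP kg hg (fun v => (kb v / kb 0)⁻¹ * f₄ v * volterraP kb hb f₃ v) u) t) x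
        + volterraP ka ha (fun t => (kb t / kb 0)⁻¹ * (kg t / kg 0) * f₂ t * (kd t / kd 0) * volterraP kb hb (fun u => (kd u / kd 0)⁻¹ * f₃ u * volterraP kd hd (fun v => (kg v / kg 0)⁻¹ * f₅ v * volterraP kg hg f₄ v) u) t) x := by
    calc volterraP ka ha (fun t => (kb t / kb 0)⁻¹ * (kg t / kg 0 * f₂ t * volterraP kd hd (fun v => (kg v / kg 0)⁻¹ * f₅ v * volterraP kg hg f₄ v) t) * volterraP kb hb f₃ t) x
        = volterraP ka ha (fun t => (kg t / kg 0 * f₂ t * volterraP kd hd (fun u => (kb u / kb 0)⁻¹ * f₅ u * volterraP kb hb (fun v => (kg v / kg 0)⁻¹ * f₃ v * volterraP kg hg f₄ v) u) t) + (kg t / kg 0 * f₂ t * volterraP kd hd (fun u => (kg u / kg 0)⁻¹ * f₅ u * volterraP kg hg (fun v => (kb v / kb 0)⁻¹ * f₄ v * volterraP kb hb f₃ v) u) t) + ((kb t / kb 0)⁻¹ * (kg t / kg 0) * f₂ t * (kd t / kd 0) * volterraP kb hb (fun u => (kd u / kd 0)⁻¹ * f₃ u * volterraP kd hd (fun v =>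 (kg v / kg 0)⁻¹ * f₅ v * volterraP kg hg f₄ v) u) t)) x :=
          volterraP_congr hG2pt x
      _ = volterraP ka ha (fun t => (kg t / kg 0 * f₂ t * volterraP kd hd (fun u => (kb u / kb 0)⁻¹ * f₅ u * volterraP kb hb (fun v => (kg v / kg 0)⁻¹ * f₃ v * volterraP kg hg f₄ v) u) t) + (kg t / kg 0 * f₂ t * volterraP kd hd (fun u => (kg u / kg 0)⁻¹ * f₅ u * volterraP kg hg (fun v => (kb v / kb 0)⁻¹ * f₄ v * volterraP kb hb f₃ v) u) t)) x
          + volterraP ka ha (fun t => (kb t / kb 0)⁻¹ * (kg t / kg 0) * f₂ t * (kd t / kd 0) * volterraP kb hb (fun u => (kd u / kd 0)⁻¹ * f₃ u * volterraP kd hd (fun v => (kg v / kg 0)⁻¹ * f₅ v * volterraP kg hg f₄ v) u) t) x :=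
          volterraP_add hka hha (cT7.add cT8) cT6 x
      _ = volterraP ka ha (fun t => kg t / kg 0 * f₂ t * volterraP kd hd (fun u => (kb u / kb 0)⁻¹ * f₅ u * volterraP kb hb (fun v => (kg v / kg 0)⁻¹ * f₃ v * volterraP kg hg f₄ v) u) t) x + volterraP ka ha (fun t => kg t / kg 0 * f₂ t * volterraP kd hd (fun u => (kg u / kg 0)⁻¹ * f₅ u * volterraP kg hg (fun v => (kb v / kb 0)⁻¹ * f₄ v * volterraP kb hb f₃ v) u) t) x
          + volterraP ka ha (fun t => (kb t / kb 0)⁻¹ * (kg t / kg 0) * f₂ t * (kd t / kd 0) * volterraP kb hb (fun u => (kd u / kd 0)⁻¹ * f₃ u * volterraP kd hd (fun v => (kg v / kg 0)⁻¹ * f₅ v * volterraP kg hg f₄ v) u) t) x := by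
          rw [volterraP_add hka hha cT7 cT8 x]
  linear_combination (f₁ x * volterraP kb hb f₃ x) * h1 + f₁ x * h2 + f₁ x * h2'
    + (kb x / kb 0 * f₁ x) * hG1 + (kb x / kb 0 * f₁ x) * hG2
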